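/- arXiv:2412.19921 — 5 statements merged into one kernel-verified Lean document; each statement's English description precedes it below -/
import Mathlib

section
/- Suppose n ≥ 3 and V has finite dimension d over K with d > n. Then no alternating n-linear form on V is non-degenerate: for every alternating n-linear form f on V the induced linear map Ψ : ⋀^{n-1} V → V* is not injective, i.e., there exists a nonzero t ∈ ⋀^{n-1} V with ⟨t, w⟩₂ = 0 for all w ∈ V. -/
/-!
`⋀^m V` has dimension `C(d, m)`, which exceeds `d = dim V*` when `2 ≤ m ≤ d - 2`,
so no linear map `⋀^m V → V*` can be injective.
-/

variable {K : Type*} [Field K] {V : Type*} [AddCommGroup V] [Module K V]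

/-- The pure wedge `v₁ ∧ ⋯ ∧ v_m` as an element of the `m`-th exterior power. -/
noncomputable def wedge (m : ℕ) (v : Fin m → V) : ⋀[K]^m V :=
  ⟨ExteriorAlgebra.ιMulti K m v, ExteriorAlgebra.ιMulti_range K m (Set.mem_range_self v)⟩

/-- `B` is the bilinear pairing `⋀^m V × V → K` induced by the alternating
`(m+1)`-linear form `f`, determined on pure wedges by
`⟨v₁ ∧ ⋯ ∧ v_m, w⟩₂ = f (v₁, …, v_m, w)`. -/
def IsInducedPairing (m : ℕ) (f : V [⋀^Fin (m+1)]→ₗ[K] K)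
    (B : ⋀[K]^m V →ₗ[K] V →ₗ[K] K) : Prop :=
  ∀ (v : Fin m → V) (w : V), B (wedge m v) w = f (Fin.snoc v w)

theorem Nat.self_le_choose {n k : ℕ} (hk : 1 ≤ k) (hkn : k < n) : n ≤ n.choose k := by
  induction n generalizing k with
  | zero => omega
  | succ n ih =>
    obtain ⟨j, rfl⟩ : ∃ j, k = j + 1 := ⟨k - 1, by omega⟩
    rcases Nat.eq_zero_or_pos j with rfl | hj
    · simp
    · have hle := ih hj (by omega)
      have hpos : 0 < n.choose (j + 1) := Nat.choose_pos (by omega)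
      rw [Nat.choose_succ_succ']
      omega

theorem Nat.self_lt_choose {n k : ℕ} (hk : 2 ≤ k) (hkn : k + 1 < n) : n < n.choose k := by
  obtain ⟨j, rfl⟩ : ∃ j, k = j + 1 := ⟨k - 1, by omega⟩
  obtain ⟨e, rfl⟩ : ∃ e, n = e + 1 := ⟨n - 1, by omega⟩
  have h₁ := Nat.self_le_choose (n := e) (k := j) (by omega) (by omega)
  have h₂ := Nat.self_le_choose (n := e) (k := j + 1) (by omega) (by omega)
  rw [Nat.choose_succ_succ']
  omega

theorem exteriorPower.finrank_dual_lt_finrank [FiniteDimensional K V] {m : ℕ} (hm : 2 ≤ m)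
    (hdim : m + 1 < Module.finrank K V) :
    Module.finrank K (V →ₗ[K] K) < Module.finrank K (⋀[K]^m V) := by
  rw [exteriorPower.finrank_eq, Subspace.dual_finrank_eq]
  exact Nat.self_lt_choose hm hdim

theorem statement1_general (m : ℕ) (hm : 2 ≤ m) (d : ℕ)
    [FiniteDimensional K V] (hdim : Module.finrank K V = d) (hd : m + 1 < d)
    (B : ⋀[K]^m V →ₗ[K] V →ₗ[K] K) :
    ¬ Function.Injective B ∧
      ∃ t : ⋀[K]^m V, t ≠ 0 ∧ ∀ w : V, B t w = 0 := by
  have hlt := exteriorPower.finrank_dual_lt_finrank hm (hdim ▸ hd)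
  have hnot_inj : ¬ Function.Injective B := fun hinj =>
    (LinearMap.finrank_le_finrank_of_injective hinj).not_gt hlt
  obtain ⟨t, ht, hne⟩ := (Submodule.ne_bot_iff _).mp (mt LinearMap.ker_eq_bot.mp hnot_inj)
  exact ⟨hnot_inj, t, hne, fun w => by rw [LinearMap.mem_ker.mp ht, LinearMap.zero_apply]⟩

theorem statement1 (m : ℕ) (hm : 2 ≤ m) (d : ℕ)
    [FiniteDimensional K V] (hdim : Module.finrank K V = d) (hd : m + 1 < d)
    (f : V [⋀^Fin (m+1)]→ₗ[K] K) (B : ⋀[K]^m V →ₗ[K] V →ₗ[K] K)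
    (hB : IsInducedPairing m f B) :
    ¬ Function.Injective B ∧
      ∃ t : ⋀[K]^m V, t ≠ 0 ∧ ∀ w : V, B t w = 0 :=
  statement1_general m hm d hdim hd B
end

section
/- Suppose V is infinite-dimensional over K and the alternating n-linear form f is non-degenerate. Let U be a finite-dimensional K-subspace of V, let t₁, …, t_m ∈ ⋀^{n-1} V be K-linearly independent, and let k₁, …, k_m ∈ K. Then there exists w ∈ V with w ∉ U such that ⟨t_i, w⟩₂ = k_i for all i ≤ m. -/
/-!
Nondegeneracy and linear independence make `w ↦ (⟨tᵢ, w⟩₂)ᵢ` surjective onto `Kˡ`: a nonzero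
functional on `Kˡ` vanishing on its range has coefficients `c` with `∑ cᵢ tᵢ ≠ 0` pairing
trivially with all of `V`. The kernel of this map has finite codimension, so in
infinite-dimensional `V` it is not contained in the finite-dimensional `U`; adding a kernel
vector outside `U` to a solution gives a solution outside `U`.
-/

variable {K : Type*} [Field K] {V : Type*} [AddCommGroup V] [Module K V]

/-- The form is non-degenerate. -/
def PairNondegenerate (m : ℕ) (B : ⋀[K]^m V →ₗ[K] V →ₗ[K] K) : Prop :=
  ∀ t : ⋀[K]^m V, t ≠ 0 → ∃ w : V, B t w ≠ 0

/-- The form is generic: every finite linearly independent family in `⋀^m V` can be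
sent to any prescribed tuple of scalars by pairing with a single vector `w ∈ V`. -/
def PairGeneric (m : ℕ) (B : ⋀[K]^m V →ₗ[K] V →ₗ[K] K) : Prop :=
  ∀ (l : ℕ) (t : Fin l → ⋀[K]^m V), LinearIndependent K t →
    ∀ k : Fin l → K, ∃ w : V, ∀ i, B (t i) w = k i

section
variable {M N : Type*} [AddCommGroup M] [Module K M] [AddCommGroup N] [Module K N]

theorem LinearMap.surjective_pi_of_linearIndependent (B : M →ₗ[K] N →ₗ[K] K)
    (hB : ∀ s : M, s ≠ 0 → ∃ w : N, B s w ≠ 0) {ι : Type*} [Fintype ι] {t : ι → M}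
    (ht : LinearIndependent K t) : Function.Surjective (LinearMap.pi fun i ↦ B (t i)) := by
  rw [← dualMap_injective_iff, injective_iff_map_eq_zero]
  intro g hg
  set c : ι → K := fun i ↦ g (Pi.basisFun K ι i)
  have hgB : ∀ w, g (LinearMap.pi (fun i ↦ B (t i)) w) = B (∑ i, c i • t i) w := by
    intro w
    rw [← (Pi.basisFun K ι).sum_repr (LinearMap.pi (fun i ↦ B (t i)) w)]
    simp [c, mul_comm]
  have hsum : ∑ i, c i • t i = 0 := by
    by_contra hne
    obtain ⟨w, hw⟩ := hB _ hne
    exact hw (by rw [← hgB]; exact LinearMap.congr_fun hg w)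
  exact (Pi.basisFun K ι).ext fun i ↦ Fintype.linearIndependent_iff.1 ht c hsum i

theorem LinearMap.not_ker_le_of_not_finiteDimensional (hM : ¬FiniteDimensional K M)
    [FiniteDimensional K N] (φ : M →ₗ[K] N) (U : Submodule K M) [FiniteDimensional K U] :
    ¬LinearMap.ker φ ≤ U := by
  intro hle
  have : FiniteDimensional K (LinearMap.ker φ) := Submodule.finiteDimensional_of_le hle
  have : FiniteDimensional K (M ⧸ LinearMap.ker φ) :=
    φ.quotKerEquivRange.symm.finiteDimensional
  exact hM (Module.Finite.of_submodule_quotient (LinearMap.ker φ))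

theorem LinearMap.exists_notMem_apply_eq_of_not_ker_le {φ : M →ₗ[K] N} {U : Submodule K M}
    (hker : ¬LinearMap.ker φ ≤ U) (w₀ : M) : ∃ w ∉ U, φ w = φ w₀ := by
  by_cases hw₀ : w₀ ∈ U
  · obtain ⟨u, hu, huU⟩ := SetLike.not_le_iff_exists.1 hker
    refine ⟨w₀ + u, fun h ↦ huU ?_, by rw [map_add, LinearMap.mem_ker.1 hu, add_zero]⟩
    simpa using U.sub_mem h hw₀
  · exact ⟨w₀, hw₀, rfl⟩

end

theorem statement9_general (m : ℕ) (hV : ¬ FiniteDimensional K V)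
    (B : ⋀[K]^m V →ₗ[K] V →ₗ[K] K)
    (hnd : PairNondegenerate m B)
    (U : Submodule K V) (hU : FiniteDimensional K ↥U)
    (l : ℕ) (t : Fin l → ⋀[K]^m V) (ht : LinearIndependent K t) (k : Fin l → K) :
    ∃ w : V, w ∉ U ∧ ∀ i, B (t i) w = k i := by
  set φ : V →ₗ[K] (Fin l → K) := LinearMap.pi fun i ↦ B (t i)
  obtain ⟨w₀, hw₀⟩ := B.surjective_pi_of_linearIndependent hnd ht k
  obtain ⟨w, hwU, hw⟩ :=
    LinearMap.exists_notMem_apply_eq_of_not_ker_le (φ.not_ker_le_of_not_finiteDimensional hV U) w₀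
  exact ⟨w, hwU, fun i ↦ congrFun (hw.trans hw₀) i⟩

theorem statement9 (m : ℕ) (hm : 1 ≤ m) (hV : ¬ FiniteDimensional K V)
    (f : V [⋀^Fin (m+1)]→ₗ[K] K) (B : ⋀[K]^m V →ₗ[K] V →ₗ[K] K)
    (hB : IsInducedPairing m f B) (hnd : PairNondegenerate m B)
    (U : Submodule K V) (hU : FiniteDimensional K ↥U)
    (l : ℕ) (t : Fin l → ⋀[K]^m V) (ht : LinearIndependent K t) (k : Fin l → K) :
    ∃ w : V, w ∉ U ∧ ∀ i, B (t i) w = k i :=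
  statement9_general m hV B hnd U hU l t ht k
end

section
/- Suppose V has finite dimension exactly n over K, where n ≥ 2, and f is an alternating n-linear form on V. Then the following are equivalent: (a) f is non-degenerate; (b) f is a perfect pairing, i.e., both Ψ : ⋀^{n-1} V → V* and Φ : V → (⋀^{n-1} V)* are linear isomorphisms; (c) f is generic. -/
variable {K : Type*} [Field K] {V : Type*} [AddCommGroup V] [Module K V]

/-!
Since `dim ⋀^{n-1} V = (n choose n-1) = n = dim V*`, an injective `Ψ : ⋀^{n-1} V → V*` is an
isomorphism, and then so is `Φ` by duality. Genericity follows from surjectivity of `Φ`: a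
functional on `⋀^{n-1} V` with prescribed values on a linearly independent family exists, by
extending it from the span of the family.
-/

theorem finrank_exteriorPower_eq_finrank_of_finrank_eq_succ [FiniteDimensional K V] {m : ℕ}
    (h : Module.finrank K V = m + 1) : Module.finrank K (⋀[K]^m V) = Module.finrank K V := by
  rw [exteriorPower.finrank_eq, h, Nat.choose_succ_self_right]

theorem Module.exists_dual_forall_apply_eq {ι : Type*} {t : ι → V} (ht : LinearIndependent K t)
    (k : ι → K) : ∃ φ : Module.Dual K V, ∀ i, φ (t i) = k i := by
  obtain ⟨φ, hφ⟩ := LinearMap.exists_extend (Finsupp.linearCombination K k ∘ₗ ht.repr)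
  refine ⟨φ, fun i => ?_⟩
  let x : Submodule.span K (Set.range t) := ⟨t i, Submodule.subset_span (Set.mem_range_self i)⟩
  simpa [ht.repr_eq_single i x rfl] using LinearMap.congr_fun hφ x

namespace LinearMap

variable {W : Type*} [AddCommGroup W] [Module K W] (B : W →ₗ[K] V →ₗ[K] K)

theorem bijective_and_bijective_flip_of_injective [FiniteDimensional K W] [FiniteDimensional K V]
    (hdim : Module.finrank K W = Module.finrank K V) (h : Function.Injective B) :
    Function.Bijective B ∧ Function.Bijective B.flip := by
  have hB : Function.Bijective B := ⟨h, (injective_iff_surjective_of_finrank_eq_finrank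
    (hdim.trans Subspace.dual_finrank_eq.symm)).mp h⟩
  exact ⟨hB, flip_bijective_iff₁.mpr hB⟩

theorem exists_forall_apply_eq_of_surjective_flip (hB : Function.Surjective B.flip) {ι : Type*}
    {t : ι → W} (ht : LinearIndependent K t) (k : ι → K) : ∃ v, ∀ i, B (t i) v = k i := by
  obtain ⟨φ, hφ⟩ := Module.exists_dual_forall_apply_eq ht k
  obtain ⟨v, rfl⟩ := hB φ
  exact ⟨v, hφ⟩

end LinearMap

theorem pairNondegenerate_iff_injective (m : ℕ) (B : ⋀[K]^m V →ₗ[K] V →ₗ[K] K) :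
    PairNondegenerate m B ↔ Function.Injective B := by
  simp only [PairNondegenerate, injective_iff_map_eq_zero, LinearMap.ext_iff, LinearMap.zero_apply]
  exact forall_congr' fun _ => not_imp_comm.trans (by simp)

theorem statement10_general (m : ℕ) [FiniteDimensional K V]
    (hdim : Module.finrank K V = m + 1)
    (B : ⋀[K]^m V →ₗ[K] V →ₗ[K] K) :
    List.TFAE
      [ PairNondegenerate m B,
        Function.Bijective B ∧ Function.Bijective B.flip,
        PairGeneric m B ] := by
  tfae_have 1 → 2 := fun h => B.bijective_and_bijective_flip_of_injective
    (finrank_exteriorPower_eq_finrank_of_finrank_eq_succ hdim)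
    ((pairNondegenerate_iff_injective m B).mp h)
  tfae_have 2 → 3 := fun h l _ ht k => B.exists_forall_apply_eq_of_surjective_flip h.2.2 ht k
  tfae_have 3 → 1 := by
    intro h t ht
    obtain ⟨w, hw⟩ := h 1 (fun _ => t) (.of_subsingleton 0 ht) (fun _ => 1)
    exact ⟨w, by simp [hw 0]⟩
  tfae_finish

theorem statement10 (m : ℕ) (hm : 1 ≤ m) [FiniteDimensional K V]
    (hdim : Module.finrank K V = m + 1)
    (f : V [⋀^Fin (m+1)]→ₗ[K] K) (B : ⋀[K]^m V →ₗ[K] V →ₗ[K] K)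
    (hB : IsInducedPairing m f B) :
    List.TFAE
      [ PairNondegenerate m B,
        Function.Bijective B ∧ Function.Bijective B.flip,
        PairGeneric m B ] :=
  statement10_general m hdim B
end

section
/- For all natural numbers k ≥ 2, d ≥ 1 and n ≥ 1, set N := 2^(n^(k-1)) and V_k := [2d] × [N] equipped with the lexicographic linear order. There exists a relation R ⊆ [n]^(k-1) × V_k with the following property: for every interval J of the linear order V_k with |J| ≥ 2N − 1 (i.e., |J| ≥ |V_k|/d − 1) and every subset S ⊆ [n]^(k-1), there exists c ∈ J such that { x ∈ [n]^(k-1) : (x, c) ∈ R } = S. In other words, the family of sections { R(·, c) : c ∈ J } shatters [n]^(k-1) (and hence has cardinality 2^(n^(k-1))). -/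
/-!
Label the `N = 2 ^ n ^ (k - 1)` values of the second coordinate of `[2d] ×ₗ [N]` by the subsets
of `[n]^(k-1)` and let `c` be related to exactly the members of the subset labelling its second
coordinate. An interval of a lexicographic product that misses some value `b` of the second
coordinate contains no two elements with a common second coordinate: between `(a, s)` and
`(a', s)` with `a < a'` lies `(a, b)` or `(a', b)`. So an interval with at least `N` elements
realises every label.
-/

namespace Prod.Lex

variable {α β : Type*}

theorem exists_mem_Icc_snd_eq [Preorder α] [LinearOrder β] {c c' : α ×ₗ β} (hlt : c < c')
    (hsnd : (ofLex c).2 = (ofLex c').2) (b : β) : ∃ x ∈ Set.Icc c c', (ofLex x).2 = b := by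
  obtain ⟨⟨a, s⟩, rfl⟩ := toLex.surjective c
  obtain ⟨⟨a', s'⟩, rfl⟩ := toLex.surjective c'
  obtain rfl : s = s' := hsnd
  have ha : a < a' := by
    rcases toLex_lt_toLex.1 hlt with h | ⟨-, h⟩
    · exact h
    · exact absurd h (lt_irrefl s)
  rcases le_or_gt b s with hb | hb
  · exact ⟨toLex (a', b), ⟨toLex_le_toLex.2 (Or.inl ha), toLex_le_toLex.2 (Or.inr ⟨rfl, hb⟩)⟩,
      rfl⟩
  · exact ⟨toLex (a, b), ⟨toLex_le_toLex.2 (Or.inr ⟨rfl, hb.le⟩), toLex_le_toLex.2 (Or.inl ha)⟩,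
      rfl⟩

theorem injOn_snd_of_ordConnected [LinearOrder α] [LinearOrder β] {J : Set (α ×ₗ β)}
    (hJ : J.OrdConnected) {b : β} (hb : ∀ c ∈ J, (ofLex c).2 ≠ b) :
    Set.InjOn (fun c : α ×ₗ β => (ofLex c).2) J := by
  have key : ∀ c ∈ J, ∀ c' ∈ J, c < c' → (ofLex c).2 ≠ (ofLex c').2 := by
    intro c hc c' hc' hlt hsnd
    obtain ⟨x, hx, rfl⟩ := exists_mem_Icc_snd_eq hlt hsnd b
    exact hb x (hJ.out hc hc' hx) rfl
  intro c hc c' hc' hsnd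
  by_contra hne
  rcases lt_or_gt_of_ne hne with hlt | hlt
  · exact key c hc c' hc' hlt hsnd
  · exact key c' hc' c hc hlt hsnd.symm

theorem image_snd_eq_univ_of_ordConnected [LinearOrder α] [LinearOrder β] [Finite β]
    {J : Set (α ×ₗ β)} (hJ : J.OrdConnected) (hcard : Nat.card β ≤ J.ncard) :
    (fun c : α ×ₗ β => (ofLex c).2) '' J = Set.univ := by
  by_contra hne
  obtain ⟨b, hb⟩ := (Set.ne_univ_iff_exists_notMem _).1 hne
  have hinj := injOn_snd_of_ordConnected hJ fun c hc hcb => hb ⟨c, hc, hcb⟩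
  have hlt : ((fun c : α ×ₗ β => (ofLex c).2) '' J).ncard < (Set.univ : Set β).ncard :=
    Set.ncard_lt_ncard (Set.ssubset_univ_iff.2 hne)
  rw [hinj.ncard_image, Set.ncard_univ] at hlt
  omega

end Prod.Lex

theorem statement11_general (k d n : ℕ) :
    ∃ R : Set ((Fin (k - 1) → Fin n) × Lex (Fin (2 * d) × Fin (2 ^ n ^ (k - 1)))),
      ∀ J : Set (Lex (Fin (2 * d) × Fin (2 ^ n ^ (k - 1)))),
        J.OrdConnected → 2 * 2 ^ n ^ (k - 1) - 1 ≤ J.ncard →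
          ∀ S : Set (Fin (k - 1) → Fin n),
            ∃ c ∈ J, {x | (x, c) ∈ R} = S := by
  let label : Fin (2 ^ n ^ (k - 1)) ≃ Set (Fin (k - 1) → Fin n) :=
    Fintype.equivOfCardEq (by simp [Fintype.card_set])
  refine ⟨{p | p.1 ∈ label (ofLex p.2).2}, fun J hJ hcard S => ?_⟩
  have hN : Nat.card (Fin (2 ^ n ^ (k - 1))) ≤ J.ncard := by
    have := Nat.one_le_two_pow (n := n ^ (k - 1))
    rw [Nat.card_fin]
    omega
  obtain ⟨c, hc, hlabel⟩ : label.symm S ∈ (fun c => (ofLex c).2) '' J := by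
    rw [Prod.Lex.image_snd_eq_univ_of_ordConnected hJ hN]
    trivial
  refine ⟨c, hc, ?_⟩
  ext x
  simp only [Set.mem_ofPred_eq, hlabel, Equiv.apply_symm_apply]

theorem statement11 (k d n : ℕ) (hk : 2 ≤ k) (hd : 1 ≤ d) (hn : 1 ≤ n) :
    ∃ R : Set ((Fin (k - 1) → Fin n) × Lex (Fin (2 * d) × Fin (2 ^ n ^ (k - 1)))),
      ∀ J : Set (Lex (Fin (2 * d) × Fin (2 ^ n ^ (k - 1)))),
        J.OrdConnected → 2 * 2 ^ n ^ (k - 1) - 1 ≤ J.ncard →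
          ∀ S : Set (Fin (k - 1) → Fin n),
            ∃ c ∈ J, {x | (x, c) ∈ R} = S :=
  statement11_general k d n
end

section
/- Let U = (v_i)_{i ∈ I} be a K-linearly independent family of vectors in V, and let L be a subfield of K. Suppose w, w₁, …, w_p are vectors lying in the L-span of U, the vectors w₁, …, w_p are K-linearly independent, and w = λ₁ w₁ + ⋯ + λ_p w_p for (necessarily unique) scalars λ₁, …, λ_p ∈ K. Then λ_i ∈ L for every i ≤ p. -/
/-!
Statement 13: Let `K` be a field, `L` a subfield of `K`, `V` a `K`-vector space,
and `(v_i)_{i ∈ I}` a `K`-linearly independent family in `V`. Suppose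
`w, w₁, …, w_p` lie in the `L`-span of the family, `w₁, …, w_p` are
`K`-linearly independent, and `w = λ₁ w₁ + ⋯ + λ_p w_p` for scalars
`λ₁, …, λ_p ∈ K`. Then `λ_i ∈ L` for every `i ≤ p`.
-/

variable {K : Type*} [Field K] {V : Type*} [AddCommGroup V] [Module K V]

/-- `w` is a finite `L`-linear combination of members of the family `v`. -/
def IsLCombIn (L : Subfield K) {I : Type*} (v : I → V) (w : V) : Prop :=
  ∃ c : I →₀ K, (∀ i, c i ∈ L) ∧ w = c.sum fun i a => a • v i

theorem statement13 {I : Type*} (L : Subfield K)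
    (v : I → V) (hv : LinearIndependent K v)
    (p : ℕ) (w : V) (ws : Fin p → V) (lam : Fin p → K)
    (hw : IsLCombIn L v w) (hws : ∀ i, IsLCombIn L v (ws i))
    (hind : LinearIndependent K ws)
    (heq : w = ∑ i, lam i • ws i) :
    ∀ i, lam i ∈ L := by
  obtain ⟨c, hc, hcw⟩ := hw
  choose d hd hdw using hws
  rw [← Finsupp.linearCombination_apply] at hcw
  have hdw' : ∀ i, ws i = Finsupp.linearCombination K v (d i) := fun i => by
    rw [Finsupp.linearCombination_apply]; exact hdw i
  -- coefficient identity
  have hC : c = ∑ i, lam i • d i := by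
    have h0 : Finsupp.linearCombination K v (c - ∑ i, lam i • d i) = 0 := by
      simp only [map_sub, map_sum, map_smul, ← hcw, ← hdw', heq, sub_self]
    exact sub_eq_zero.mp (linearIndependent_iff.mp hv _ h0)
  -- basis of K over L and coordinate functional
  let b := Module.Basis.ofVectorSpace ↥L K
  obtain ⟨e, he⟩ : ∃ e, b.repr 1 e ≠ 0 := by
    by_contra h
    push_neg at h
    have h1 : b.repr 1 = 0 := Finsupp.ext h
    have : (1 : K) = 0 := by
      have := congrArg b.repr.symm h1
      simpa using this
    exact one_ne_zero this
  set G : K →ₗ[↥L] K := (Algebra.linearMap ↥L K).comp (b.coord e) with hG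
  have hGmem : ∀ x, G x ∈ L := fun x => SetLike.coe_mem _
  have hGsmul : ∀ (a : K) (ha : a ∈ L) (x : K), G (a * x) = a * G x := by
    intro a ha x
    have : a * x = (⟨a, ha⟩ : ↥L) • x := by
      rw [Algebra.smul_def]; rfl
    rw [this, map_smul, Algebra.smul_def]; rfl
  have hG1 : G 1 ≠ 0 := by
    intro h
    apply he
    have h' : ((b.repr 1 e : ↥L) : K) = 0 := h
    exact_mod_cast h'
  -- key coordinatewise identity
  have key : ∀ j, (∑ i, G (lam i) • d i) j = (G 1 • c) j := by
    intro j
    have hcj : c j = ∑ i, lam i * d i j := by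
      rw [hC]; simp [Finsupp.finset_sum_apply, smul_eq_mul]
    have h1 : G (c j) = ∑ i, d i j * G (lam i) := by
      rw [hcj, map_sum]
      exact Finset.sum_congr rfl fun i _ => by
        rw [mul_comm (lam i), hGsmul _ (hd i j)]
    have h2 : G (c j) = c j * G 1 := by
      rw [show G (c j) = G (c j * 1) by rw [mul_one], hGsmul _ (hc j)]
    simp only [Finsupp.finset_sum_apply, Finsupp.smul_apply, smul_eq_mul]
    rw [mul_comm (G 1), ← h2, h1]
    exact Finset.sum_congr rfl fun i _ => mul_comm _ _
  have keyF : (∑ i, G (lam i) • d i) = G 1 • c := Finsupp.ext key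
  -- vector identity
  have hvec : ∑ i, G (lam i) • ws i = G 1 • w := by
    rw [hcw]
    calc ∑ i, G (lam i) • ws i
        = Finsupp.linearCombination K v (∑ i, G (lam i) • d i) := by
          rw [map_sum]
          exact Finset.sum_congr rfl fun i _ => by rw [map_smul, hdw' i]
      _ = Finsupp.linearCombination K v (G 1 • c) := by rw [keyF]
      _ = G 1 • Finsupp.linearCombination K v c := by rw [map_smul]
  have hvec2 : ∑ i, (G 1 * lam i - G (lam i)) • ws i = 0 := by
    simp only [sub_smul, Finset.sum_sub_distrib, mul_smul, ← Finset.smul_sum, ← heq, hvec,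
      sub_self]
  have hlam : ∀ i, G 1 * lam i = G (lam i) := by
    intro i
    exact sub_eq_zero.mp (Fintype.linearIndependent_iff.mp hind _ hvec2 i)
  intro i
  have : lam i = G (lam i) / G 1 := by
    field_simp
    rw [mul_comm]
    exact hlam i
  rw [this]
  exact L.div_mem (hGmem _) (hGmem _)
end
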